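/- (C2, upper bound) If 0 < y < x, then R_C(x,y) < (1/(2√x·(1 − y/(2x))))·ln(4x/y). -/

import Mathlib

open MeasureTheory Real


noncomputable def RC (x y : ℝ) : ℝ :=
  (1/2) * ∫ t in Set.Ioi (0:ℝ), (t+x) ^ (-(1/2) : ℝ) * (t+y)⁻¹

private noncomputable def gfun (s : ℝ) : ℝ :=
  2*s*Real.log 4 + (1-s)^2 * Real.log (1-s) - (1+s)^2 * Real.log (1+s)

private noncomputable def gfun1 (s : ℝ) : ℝ :=
  2*Real.log 4 - 2 - 2*(1-s)*Real.log (1-s) - 2*(1+s)*Real.log (1+s)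

private lemma gfun_hasDeriv {s : ℝ} (h1 : -1 < s) (h2 : s < 1) :
    HasDerivAt gfun (gfun1 s) s := by
  have hm : (1:ℝ) - s ≠ 0 := by linarith
  have hp : (1:ℝ) + s ≠ 0 := by linarith
  have hs1 : HasDerivAt (fun s : ℝ => 1 - s) (-1) s := by
    simpa using (hasDerivAt_id s).const_sub 1
  have hs2 : HasDerivAt (fun s : ℝ => 1 + s) 1 s := by
    simpa using (hasDerivAt_id s).const_add 1
  have hA : HasDerivAt (fun s : ℝ => (1-s)^2 * Real.log (1-s))
      ((2*(1-s)*(-1)) * Real.log (1-s) + (1-s)^2 * ((-1)/(1-s))) s := by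
    have := (hs1.pow 2).mul (hs1.log hm)
    exact this.congr_deriv (by simp only [Pi.pow_apply]; ring)
  have hB : HasDerivAt (fun s : ℝ => (1+s)^2 * Real.log (1+s))
      ((2*(1+s)*1) * Real.log (1+s) + (1+s)^2 * (1/(1+s))) s := by
    have := (hs2.pow 2).mul (hs2.log hp)
    exact this.congr_deriv (by simp only [Pi.pow_apply]; ring)
  have hC : HasDerivAt (fun s : ℝ => 2*s*Real.log 4) (2*Real.log 4) s := by
    have := (hasDerivAt_id s).const_mul (2*Real.log 4)
    have h2 : HasDerivAt (fun y : ℝ => 2*Real.log 4*y) (2*Real.log 4) s := by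
      simpa using this
    exact h2.congr_of_eventuallyEq (Filter.Eventually.of_forall fun y => by ring)
  have hsum := (hC.add hA).sub hB
  exact hsum.congr_deriv (by rw [gfun1]; field_simp; ring)

private lemma gfun1_hasDeriv {s : ℝ} (h1 : -1 < s) (h2 : s < 1) :
    HasDerivAt gfun1 (2*Real.log (1-s) - 2*Real.log (1+s)) s := by
  have hm : (1:ℝ) - s ≠ 0 := by linarith
  have hp : (1:ℝ) + s ≠ 0 := by linarith
  have hs1 : HasDerivAt (fun s : ℝ => 1 - s) (-1) s := by
    simpa using (hasDerivAt_id s).const_sub 1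
  have hs2 : HasDerivAt (fun s : ℝ => 1 + s) 1 s := by
    simpa using (hasDerivAt_id s).const_add 1
  have hA : HasDerivAt (fun s : ℝ => 2*(1-s)*Real.log (1-s))
      ((2*(-1))*Real.log (1-s) + 2*(1-s)*((-1)/(1-s))) s := by
    have := ((hs1.const_mul 2).mul (hs1.log hm))
    exact this.congr_deriv (by ring)
  have hB : HasDerivAt (fun s : ℝ => 2*(1+s)*Real.log (1+s))
      ((2*1)*Real.log (1+s) + 2*(1+s)*(1/(1+s))) s := by
    have := ((hs2.const_mul 2).mul (hs2.log hp))
    exact this.congr_deriv (by ring)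
  have hconst : HasDerivAt (fun _ : ℝ => 2*Real.log 4 - 2) 0 s := hasDerivAt_const _ _
  have hsum := (hconst.sub hA).sub hB
  have : gfun1 = fun s : ℝ => (2*Real.log 4 - 2 - 2*(1-s)*Real.log (1-s)) - 2*(1+s)*Real.log (1+s) := by
    funext t; rw [gfun1]
  rw [this]
  exact hsum.congr_deriv (by field_simp; ring)

private lemma gfun_continuous : Continuous gfun := by
  have h : Continuous fun u : ℝ => u * (u * Real.log u) :=
    continuous_id.mul Real.continuous_mul_log
  have h1 : Continuous fun s : ℝ => (1-s)^2 * Real.log (1-s) := by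
    have := h.comp (continuous_const.sub continuous_id : Continuous fun s : ℝ => 1 - s)
    convert this using 1; funext t; simp [Function.comp]; ring
  have h2 : Continuous fun s : ℝ => (1+s)^2 * Real.log (1+s) := by
    have := h.comp (continuous_const.add continuous_id : Continuous fun s : ℝ => 1 + s)
    convert this using 1; funext t; simp [Function.comp]; ring
  have : gfun = fun s => 2*s*Real.log 4 + (1-s)^2 * Real.log (1-s) - (1+s)^2 * Real.log (1+s) := rfl
  rw [this]
  exact ((((continuous_const.mul continuous_id).mul continuous_const : Continuous fun s:ℝ => 2*s*Real.log 4)).add h1).sub h2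

private lemma gfun_pos {s : ℝ} (h1 : 0 < s) (h2 : s < 1) : 0 < gfun s := by
  have hconc : StrictConcaveOn ℝ (Set.Icc (0:ℝ) 1) gfun := by
    apply strictConcaveOn_of_deriv2_neg (convex_Icc 0 1) gfun_continuous.continuousOn
    intro t ht
    rw [interior_Icc] at ht
    have ht1 : (-1:ℝ) < t := by linarith [ht.1]
    have ht2 : t < 1 := ht.2
    have heq : deriv (deriv gfun) t = 2*Real.log (1-t) - 2*Real.log (1+t) := by
      have hev : deriv gfun =ᶠ[nhds t] gfun1 := by
        have : Set.Ioo (-1:ℝ) 1 ∈ nhds t := isOpen_Ioo.mem_nhds ⟨ht1, ht2⟩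
        filter_upwards [this] with u hu
        exact (gfun_hasDeriv hu.1 hu.2).deriv
      rw [hev.deriv_eq]
      exact (gfun1_hasDeriv ht1 ht2).deriv
    simp only [Function.iterate_succ, Function.iterate_zero, Function.comp_apply, id_eq]
    rw [heq]
    have : Real.log (1-t) < Real.log (1+t) :=
      Real.log_lt_log (by linarith [ht.1]) (by linarith [ht.1])
    linarith
  have h0 : gfun 0 = 0 := by simp [gfun]
  have h1' : gfun 1 = 0 := by
    have : Real.log 4 = 2 * Real.log 2 := by
      rw [show (4:ℝ) = 2^2 by norm_num, Real.log_pow]; push_cast; ring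
    simp [gfun, this]; ring
  have key := hconc.2 (Set.left_mem_Icc.2 zero_le_one) (Set.right_mem_Icc.2 zero_le_one)
    (by norm_num) (by linarith : (0:ℝ) < 1 - s) h1 (by ring)
  simp only [smul_eq_mul, mul_zero, mul_one, zero_add, h0, h1'] at key
  linarith [key]



private lemma RC_eval {x y : ℝ} (hy : 0 < y) (hyx : y < x) :
    RC x y = (1/(2*Real.sqrt (x-y))) *
      (Real.log (Real.sqrt x + Real.sqrt (x-y)) - Real.log (Real.sqrt x - Real.sqrt (x-y))) := by
  have hx : 0 < x := hy.trans hyx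
  set a := Real.sqrt (x-y) with ha_def
  have hxy : 0 < x - y := by linarith
  have ha : 0 < a := Real.sqrt_pos.2 hxy
  have ha2 : a * a = x - y := Real.mul_self_sqrt hxy.le
  set F : ℝ → ℝ := fun t => (1/a) * (Real.log (Real.sqrt (t+x) - a) - Real.log (Real.sqrt (t+x) + a)) with hF_def
  have hua : ∀ t : ℝ, 0 ≤ t → a < Real.sqrt (t+x) := by
    intro t ht
    exact Real.sqrt_lt_sqrt hxy.le (by linarith)
  have hderiv : ∀ t ∈ Set.Ici (0:ℝ), HasDerivAt F ((t+x) ^ (-(1/2) : ℝ) * (t+y)⁻¹) t := by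
    intro t ht
    have ht : (0:ℝ) ≤ t := ht
    have htx : 0 < t + x := by linarith
    have hu := hua t ht
    have hu0 : 0 < Real.sqrt (t+x) := lt_trans ha hu
    have hu2 : Real.sqrt (t+x) * Real.sqrt (t+x) = t + x := Real.mul_self_sqrt htx.le
    have hsq : HasDerivAt (fun t : ℝ => Real.sqrt (t+x)) (1/(2*Real.sqrt (t+x))) t := by
      have h := (Real.hasDerivAt_sqrt (ne_of_gt htx)).comp t ((hasDerivAt_id t).add_const x)
      simpa [Function.comp_def] using h
    have hlog1 := (hsq.sub_const a).log (ne_of_gt (by linarith))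
    have hlog2 := (hsq.add_const a).log (ne_of_gt (by linarith))
    have hF := (hlog1.sub hlog2).const_mul (1/a)
    refine hF.congr_deriv ?_
    rw [Real.rpow_neg htx.le, ← Real.sqrt_eq_rpow]
    have hty : t + y = Real.sqrt (t+x) * Real.sqrt (t+x) - a * a := by
      rw [hu2, ha2]; ring
    rw [hty]
    set u := Real.sqrt (t+x) with hu_def
    have h1 : u - a ≠ 0 := ne_of_gt (by linarith)
    have h2 : u + a ≠ 0 := ne_of_gt (by linarith)
    have h3 : u ≠ 0 := ne_of_gt hu0
    have h4 : a ≠ 0 := ne_of_gt ha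
    have h5 : u * u - a * a ≠ 0 := by
      rw [show u*u - a*a = (u-a)*(u+a) by ring]; exact mul_ne_zero h1 h2
    have h6 : u ^ 2 - a ^ 2 ≠ 0 := by rw [sq, sq]; exact h5
    field_simp
    ring
  have hnonneg : ∀ t ∈ Set.Ioi (0:ℝ), 0 ≤ (t+x) ^ (-(1/2) : ℝ) * (t+y)⁻¹ := by
    intro t ht
    have ht : (0:ℝ) < t := ht
    exact mul_nonneg (Real.rpow_nonneg (by linarith) _) (inv_nonneg.2 (by linarith))
  have hsqrt_top : Filter.Tendsto (fun t : ℝ => Real.sqrt (t+x)) Filter.atTop Filter.atTop := by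
    have h := (tendsto_rpow_atTop one_half_pos).comp
      (Filter.tendsto_atTop_add_const_right Filter.atTop x Filter.tendsto_id)
    convert h using 1
    funext t
    rw [Real.sqrt_eq_rpow]
    rfl
  have hratio : Filter.Tendsto (fun u : ℝ => (u-a)/(u+a)) Filter.atTop (nhds 1) := by
    have h0 : Filter.Tendsto (fun u : ℝ => 1 - 2*a/(u+a)) Filter.atTop (nhds (1 - 0)) :=
      tendsto_const_nhds.sub (Filter.Tendsto.div_atTop tendsto_const_nhds
        (Filter.tendsto_atTop_add_const_right Filter.atTop a Filter.tendsto_id))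
    rw [sub_zero] at h0
    apply h0.congr'
    filter_upwards [Filter.eventually_gt_atTop (-a)] with u hu
    have : u + a ≠ 0 := ne_of_gt (by linarith)
    field_simp
    ring
  have hlogd : Filter.Tendsto (fun u : ℝ => Real.log (u-a) - Real.log (u+a))
      Filter.atTop (nhds 0) := by
    have hc : Filter.Tendsto Real.log (nhds 1) (nhds 0) := by
      have := (Real.continuousAt_log one_ne_zero).tendsto
      rwa [Real.log_one] at this
    apply (hc.comp hratio).congr'
    filter_upwards [Filter.eventually_gt_atTop a] with u hu
    have h1 : u - a ≠ 0 := ne_of_gt (by linarith)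
    have h2 : u + a ≠ 0 := ne_of_gt (by linarith)
    simp only [Function.comp_apply]
    rw [Real.log_div h1 h2]
  have hFt : Filter.Tendsto F Filter.atTop (nhds 0) := by
    have h := (hlogd.comp hsqrt_top).const_mul (1/a)
    rw [mul_zero] at h
    exact h
  have hint : ∫ t in Set.Ioi (0:ℝ), (t+x) ^ (-(1/2) : ℝ) * (t+y)⁻¹ = 0 - F 0 :=
    integral_Ioi_of_hasDerivAt_of_nonneg' hderiv hnonneg hFt
  rw [RC, hint, hF_def]
  simp only [zero_add, zero_sub]
  field_simp
  ring

/-- (C2), upper bound. -/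
theorem RC_upper_bound (x y : ℝ) (hy : 0 < y) (hyx : y < x) :
    RC x y < (1 / (2 * Real.sqrt x * (1 - y / (2 * x)))) * Real.log (4 * x / y) := by
  have hx : 0 < x := hy.trans hyx
  have hxy : 0 < x - y := by linarith
  set r := Real.sqrt x with hr_def
  set a := Real.sqrt (x - y) with ha_def
  have hr : 0 < r := Real.sqrt_pos.2 hx
  have ha : 0 < a := Real.sqrt_pos.2 hxy
  have har : a < r := Real.sqrt_lt_sqrt hxy.le (by linarith)
  have hr2 : r * r = x := Real.mul_self_sqrt hx.le
  have ha2 : a * a = x - y := Real.mul_self_sqrt hxy.le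
  have hrne : r ≠ 0 := ne_of_gt hr
  have hane : a ≠ 0 := ne_of_gt ha
  have hra : r - a ≠ 0 := ne_of_gt (by linarith)
  have hpa : r + a ≠ 0 := ne_of_gt (by linarith)
  -- coefficient identity
  have hcoef : 2 * Real.sqrt x * (1 - y / (2 * x)) = (r * r + a * a) / r := by
    rw [ha2, ← hr_def]
    field_simp
    nlinarith [hr2]
  -- log identity
  have hy' : y = (r - a) * (r + a) := by nlinarith [hr2, ha2]
  set M := Real.log 4 + 2 * Real.log r - Real.log (r - a) - Real.log (r + a) with hM_def
  have hlogM : Real.log (4 * x / y) = M := by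
    rw [Real.log_div (by positivity) (ne_of_gt hy), Real.log_mul (by norm_num) (ne_of_gt hx)]
    rw [← hr2, Real.log_mul hrne hrne]
    rw [hy', Real.log_mul hra hpa]
    rw [hM_def]; ring
  set L := Real.log (r + a) - Real.log (r - a) with hL_def
  have hRC : RC x y = (1 / (2 * a)) * L := by
    rw [RC_eval hy hyx, ← ha_def, ← hr_def, ← hL_def]
  -- key inequality
  have hs1 : 0 < a / r := div_pos ha hr
  have hs2 : a / r < 1 := (div_lt_one hr).2 har
  have hkey := gfun_pos hs1 hs2
  rw [gfun] at hkey
  have e1 : 1 - a / r = (r - a) / r := by field_simp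
  have e2 : 1 + a / r = (r + a) / r := by field_simp
  rw [e1, e2, Real.log_div hra hrne, Real.log_div hpa hrne] at hkey
  have hkey2 : 0 < 2 * a * r * Real.log 4 + 4 * a * r * Real.log r
      + (r - a) ^ 2 * Real.log (r - a) - (r + a) ^ 2 * Real.log (r + a) := by
    have h := mul_pos (mul_pos hr hr) hkey
    have heq : r * r * (2 * (a / r) * Real.log 4
        + ((r - a) / r) ^ 2 * (Real.log (r - a) - Real.log r)
        - ((r + a) / r) ^ 2 * (Real.log (r + a) - Real.log r))
        = 2 * a * r * Real.log 4 + 4 * a * r * Real.log r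
        + (r - a) ^ 2 * Real.log (r - a) - (r + a) ^ 2 * Real.log (r + a) := by
      field_simp
      ring
    linarith [heq ▸ h]
  have hkey3 : 0 < 2 * a * r * M - (r * r + a * a) * L := by
    rw [hM_def, hL_def]; nlinarith [hkey2]
  rw [hRC, hlogM, hcoef]
  have hden : 0 < 2 * a * (r * r + a * a) := by positivity
  have expand : (1 / ((r * r + a * a) / r)) * M - (1 / (2 * a)) * L
      = (2 * a * r * M - (r * r + a * a) * L) / (2 * a * (r * r + a * a)) := by
    field_simp
  have := div_pos hkey3 hden
  linarith [expand ▸ this]
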